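/- Let f : ℝ → ℝ be locally integrable and μ-almost periodic with f(t) − σ ≥ 0 a.e., σ ≥ 0. The firing map of the LIF model driven by f is well-defined for every t ∈ ℝ if and only if there exists a measurable set A ⊆ ℝ of positive Lebesgue measure with f(t) − σ > 0 for a.e. t ∈ A. -/

import Mathlib

open MeasureTheory Filter Set intervalIntegral

noncomputable section

/-- A set `A ⊆ ℝ` is relatively dense. -/
def RelDense (A : Set ℝ) : Prop := ∃ l > 0, ∀ x : ℝ, ∃ τ ∈ A, x < τ ∧ τ < x + l

/-- The set over which the infimum defining the LIF firing map is taken. -/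
def FiringSet (σ : ℝ) (f : ℝ → ℝ) (t : ℝ) : Set ℝ :=
  {t' | t < t' ∧ Real.exp (σ * t) ≤ ∫ u in t..t', (f u - σ) * Real.exp (σ * u)}

/-- `y` is the firing-map value at `t`: the smallest `t' > t` with
`e^{σ t} = ∫_t^{t'} (f u - σ) e^{σ u} du`. -/
def FiringEq (σ : ℝ) (f : ℝ → ℝ) (t y : ℝ) : Prop :=
  IsLeast {t' | t < t' ∧ Real.exp (σ * t) = ∫ u in t..t', (f u - σ) * Real.exp (σ * u)} y

/-- The Stepanov `S¹` seminorm. -/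
def SNorm (f : ℝ → ℝ) : ℝ := ⨆ t : ℝ, ∫ u in t..(t + 1), |f u|

/-- Stepanov `S¹`-almost periodicity. -/
def S1AP (f : ℝ → ℝ) : Prop :=
  ∀ ε > 0, RelDense {τ | SNorm (fun u => f (u + τ) - f u) < ε}

/-- `D(η; f, g) = sup_u μ({t ∈ [u,u+1] : |f t - g t| ≥ η})`. -/
def Dfun (η : ℝ) (f g : ℝ → ℝ) : ℝ :=
  ⨆ u : ℝ, (volume {t ∈ Set.Icc u (u + 1) | η ≤ |f t - g t|}).toReal

/-- Almost periodicity in the Lebesgue measure (μ-almost periodicity). -/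
def MuAP (f : ℝ → ℝ) : Prop :=
  ∀ ε > 0, ∀ η > 0, RelDense {τ | Dfun η (fun t => f (t + τ)) f ≤ ε}

/-- Bohr (uniform) almost periodicity. -/
def BohrAP (g : ℝ → ℝ) : Prop :=
  Continuous g ∧ ∀ ε > 0, RelDense {τ | (⨆ t : ℝ, |g (t + τ) - g t|) < ε}

/-- Limit-periodicity: `g` is a uniform limit of continuous periodic functions. -/
def LimitPeriodic (g : ℝ → ℝ) : Prop :=
  ∃ gn : ℕ → ℝ → ℝ, (∀ n, Continuous (gn n) ∧ ∃ p > 0, Function.Periodic (gn n) p) ∧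
    TendstoUniformly gn g atTop

/-! With `h = f - σ ≥ 0`: a nonempty firing set forces `h` not to vanish a.e., so `f > σ` on a set
of positive measure. Conversely such a set gives a unit interval `[a, a + 1]` with `c = ∫ h > 0`.
By absolute continuity of the integral, sets of measure `≤ ε` carry at most `c / 4` of `∫ h`, so
every `τ` in the relatively dense set of `(ε, c / 4)`-almost periods satisfies
`∫ h ≥ c / 2` over `[a + τ, a + 1 + τ]`. Hence `∫_t^s h → ∞`, and as `e^{σ u} ≥ e^{σ t}` on `[t, s]`
the threshold `e^{σ t}` is eventually reached. -/

open Topology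

lemma MeasureTheory.LocallyIntegrable.intervalIntegrable {h : ℝ → ℝ}
    (hloc : LocallyIntegrable h volume) (a b : ℝ) : IntervalIntegrable h volume a b :=
  (hloc.integrableOn_isCompact isCompact_uIcc).intervalIntegrable

lemma MuAP.sub_const {f : ℝ → ℝ} (hap : MuAP f) (c : ℝ) : MuAP fun t => f t - c := by
  simpa only [MuAP, Dfun, sub_sub_sub_cancel_right] using hap

lemma measure_le_Dfun (η : ℝ) (g f : ℝ → ℝ) (u : ℝ) :
    (volume {t ∈ Icc u (u + 1) | η ≤ |g t - f t|}).toReal ≤ Dfun η g f := by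
  refine le_ciSup (f := fun u => (volume {t ∈ Icc u (u + 1) | η ≤ |g t - f t|}).toReal)
    ⟨1, ?_⟩ u
  rintro _ ⟨v, rfl⟩
  calc (volume {t ∈ Icc v (v + 1) | η ≤ |g t - f t|}).toReal
      ≤ (volume (Icc v (v + 1))).toReal :=
        ENNReal.toReal_mono measure_Icc_lt_top.ne (measure_mono (sep_subset _ _))
    _ = 1 := by simp [Real.volume_Icc]

lemma exists_pos_forall_setIntegral_le {α : Type*} [MeasurableSpace α] {μ : Measure α}
    {h : α → ℝ} (hi : Integrable h μ) {c : ℝ} (hc : 0 < c) :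
    ∃ ε > 0, ∀ B, μ B ≤ ENNReal.ofReal ε → ∫ x in B, h x ∂μ ≤ c := by
  have hsmall : ∀ᶠ B in comap μ (𝓝 0), ∫ x in B, h x ∂μ < c :=
    (tendsto_order.1 (hi.tendsto_setIntegral_nhds_zero (s := id) tendsto_comap)).2 c hc
  obtain ⟨δ, hδ, hδc⟩ := (ENNReal.nhds_zero_basis.comap μ).eventually_iff.1 hsmall
  obtain ⟨ε, -, hε, hεδ⟩ := ENNReal.lt_iff_exists_real_btwn.1 hδ
  exact ⟨ε, ENNReal.ofReal_pos.1 hε, fun B hB => (hδc (hB.trans_lt hεδ)).le⟩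

lemma intervalIntegral_sub_le_intervalIntegral_add_of_Dfun_le {h : ℝ → ℝ}
    (hloc : LocallyIntegrable h volume) (h0 : 0 ≤ᵐ[volume] h) {a τ η ε c : ℝ} (hη : 0 ≤ η)
    (hε : 0 ≤ ε)
    (habs : ∀ B, volume.restrict (Ioc a (a + 1)) B ≤ ENNReal.ofReal ε →
      ∫ x in B, h x ∂volume.restrict (Ioc a (a + 1)) ≤ c)
    (hτ : Dfun η (fun t => h (t + τ)) h ≤ ε) :
    (∫ x in a..a + 1, h x) - η - c ≤ ∫ x in a + τ..a + 1 + τ, h x := by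
  rw [intervalIntegral.integral_of_le (by linarith)]
  set I := Ioc a (a + 1)
  set Bad := {t ∈ Icc a (a + 1) | η ≤ |h (t + τ) - h t|}
  set B := toMeasurable volume Bad
  have hBad : volume Bad ≤ ENNReal.ofReal ε :=
    (ENNReal.le_ofReal_iff_toReal_le
      (ne_top_of_le_ne_top measure_Icc_lt_top.ne (measure_mono (sep_subset _ _))) hε).2
      ((measure_le_Dfun η _ h a).trans hτ)
  have hB : volume.restrict I B ≤ ENNReal.ofReal ε := by
    calc volume.restrict I B ≤ volume B := Measure.restrict_apply_le _ _
      _ = volume Bad := measure_toMeasurable _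
      _ ≤ _ := hBad
  have hshift : ∀ᵐ x, 0 ≤ h (x + τ) :=
    (measurePreserving_add_right volume τ).quasiMeasurePreserving.ae h0
  -- on the measurable hull `B` of the bad set only `h (x + τ) ≥ 0` is available
  have hpt : ∀ᵐ x ∂volume.restrict I, h x - η - B.indicator h x ≤ h (x + τ) := by
    filter_upwards [ae_restrict_of_ae hshift, ae_restrict_mem measurableSet_Ioc] with x hx hxI
    by_cases hxB : x ∈ B
    · rw [indicator_of_mem hxB]
      linarith
    · have hxBad : ¬ η ≤ |h (x + τ) - h x| := fun hle =>
        hxB (subset_toMeasurable _ _ ⟨Ioc_subset_Icc_self hxI, hle⟩)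
      rw [indicator_of_notMem hxB]
      linarith [(abs_lt.1 (not_le.1 hxBad)).1]
  have hi : IntegrableOn h I := (hloc.intervalIntegrable a (a + 1)).1
  have hiτ : IntegrableOn (fun x => h (x + τ)) I :=
    (intervalIntegrable_iff_integrableOn_Ioc_of_le (by linarith)).1
      (by simpa using (hloc.intervalIntegrable (a + τ) (a + 1 + τ)).comp_add_right τ)
  have hiη : IntegrableOn (fun x => h x - η) I := hi.sub (integrableOn_const measure_Ioc_lt_top.ne)
  have hiB : IntegrableOn (B.indicator h) I := hi.indicator (measurableSet_toMeasurable _ _)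
  have hI : volume.real I = 1 := by simp [I, measureReal_def, Real.volume_Ioc]
  calc (∫ x in I, h x) - η - c
      ≤ ∫ x in I, (h x - η - B.indicator h x) := by
        rw [integral_sub hiη hiB, integral_sub hi (integrableOn_const measure_Ioc_lt_top.ne),
          MeasureTheory.integral_indicator (measurableSet_toMeasurable _ _), setIntegral_const,
          hI, one_smul]
        linarith [habs B hB]
    _ ≤ ∫ x in I, h (x + τ) := integral_mono_ae (hiη.sub hiB) hiτ hpt
    _ = ∫ x in a + τ..a + 1 + τ, h x := by
        rw [← intervalIntegral.integral_of_le (by linarith),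
          intervalIntegral.integral_comp_add_right]

lemma exists_lt_le_intervalIntegral_of_relDense {h : ℝ → ℝ} (hloc : LocallyIntegrable h volume)
    (h0 : 0 ≤ᵐ[volume] h) {T : Set ℝ} (hT : RelDense T) {a δ : ℝ} (hδ : 0 < δ)
    (hTδ : ∀ τ ∈ T, δ ≤ ∫ x in a + τ..a + 1 + τ, h x) (t M : ℝ) :
    ∃ s, t < s ∧ M ≤ ∫ x in t..s, h x := by
  obtain ⟨l, -, hTl⟩ := hT
  have hgrow : ∀ m : ℕ, ∀ t, ∃ s, t < s ∧ (m : ℝ) * δ ≤ ∫ x in t..s, h x := by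
    intro m
    induction m with
    | zero =>
      exact fun t => ⟨t + 1, by linarith, by
        simpa using intervalIntegral.integral_nonneg_of_ae (by linarith) h0⟩
    | succ m ih =>
      intro t
      obtain ⟨s, hts, hs⟩ := ih t
      obtain ⟨τ, hτT, hsτ, -⟩ := hTl (s - a)
      have hgap : 0 ≤ ∫ x in s..a + τ, h x :=
        intervalIntegral.integral_nonneg_of_ae (by linarith) h0
      refine ⟨a + 1 + τ, by linarith, ?_⟩
      rw [← intervalIntegral.integral_add_adjacent_intervals (hloc.intervalIntegrable t s)
          (hloc.intervalIntegrable s _),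
        ← intervalIntegral.integral_add_adjacent_intervals (hloc.intervalIntegrable s (a + τ))
          (hloc.intervalIntegrable _ _)]
      push_cast
      linarith [hTδ τ hτT]
  obtain ⟨m, hm⟩ := exists_nat_ge (M / δ)
  obtain ⟨s, hts, hs⟩ := hgrow m t
  exact ⟨s, hts, ((div_le_iff₀ hδ).1 hm).trans hs⟩

lemma MuAP.exists_lt_le_intervalIntegral {h : ℝ → ℝ} (hap : MuAP h)
    (hloc : LocallyIntegrable h volume) (h0 : 0 ≤ᵐ[volume] h) {a : ℝ}
    (ha : 0 < ∫ x in a..a + 1, h x) (t M : ℝ) :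
    ∃ s, t < s ∧ M ≤ ∫ x in t..s, h x := by
  set c := ∫ x in a..a + 1, h x
  obtain ⟨ε, hε, habs⟩ := exists_pos_forall_setIntegral_le (μ := volume.restrict (Ioc a (a + 1)))
    (hloc.intervalIntegrable a (a + 1)).1 (show 0 < c / 4 by linarith)
  refine exists_lt_le_intervalIntegral_of_relDense (a := a) hloc h0 (hap ε hε (c / 4) (by linarith))
    (show 0 < c / 2 by linarith) (fun τ hτ => ?_) t M
  linarith [intervalIntegral_sub_le_intervalIntegral_add_of_Dfun_le hloc h0 (by linarith) hε.le
    habs hτ]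

lemma exists_intervalIntegral_pos {h : ℝ → ℝ} (hloc : LocallyIntegrable h volume)
    (h0 : 0 ≤ᵐ[volume] h) {A : Set ℝ} (hA : 0 < volume A) (hAh : ∀ᵐ t ∂volume.restrict A, 0 < h t) :
    ∃ a : ℝ, 0 < ∫ x in a..a + 1, h x := by
  by_contra! hle
  have hzero : ∀ n : ℤ, h =ᵐ[volume.restrict (Ioc (n : ℝ) (n + 1))] 0 := fun n =>
    (intervalIntegral.integral_eq_zero_iff_of_le_of_nonneg_ae (by linarith) (ae_restrict_of_ae h0)
      (hloc.intervalIntegrable _ _)).1 ((hle n).antisymm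
        (intervalIntegral.integral_nonneg_of_ae (by linarith) h0))
  have hzero' : h =ᵐ[volume] 0 := by
    have := (ae_restrict_iUnion_iff (fun n : ℤ => Ioc (n : ℝ) (n + 1)) _).2 hzero
    rwa [iUnion_Ioc_intCast, Measure.restrict_univ] at this
  have hfalse : ∀ᵐ t ∂volume.restrict A, False := by
    filter_upwards [hAh, ae_restrict_of_ae hzero'] with t ht ht0
    exact ht.ne' ht0
  rw [eventually_false_iff_eq_bot, ae_eq_bot, Measure.restrict_eq_zero] at hfalse
  exact hA.ne' hfalse

lemma exp_mul_mul_intervalIntegral_le {h : ℝ → ℝ} {σ t s : ℝ} (hσ : 0 ≤ σ) (hts : t ≤ s)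
    (h0 : 0 ≤ᵐ[volume] h) (hi : IntervalIntegrable h volume t s) :
    Real.exp (σ * t) * ∫ u in t..s, h u ≤ ∫ u in t..s, h u * Real.exp (σ * u) := by
  rw [← intervalIntegral.integral_const_mul]
  refine intervalIntegral.integral_mono_ae_restrict hts (hi.const_mul _)
    (hi.mul_continuousOn (by fun_prop)) ?_
  filter_upwards [ae_restrict_of_ae h0, ae_restrict_mem measurableSet_Icc] with u hu hut
  rw [mul_comm]
  exact mul_le_mul_of_nonneg_left (Real.exp_le_exp.2 (mul_le_mul_of_nonneg_left hut.1 hσ)) hu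

lemma exists_pos_measure_ae_lt_of_not_ae_eq {α : Type*} [MeasurableSpace α] {μ : Measure α}
    {f : α → ℝ} (hf : AEMeasurable f μ) {σ : ℝ} (hσf : ∀ᵐ t ∂μ, σ ≤ f t)
    (hne : ¬ f =ᵐ[μ] fun _ => σ) :
    ∃ A : Set α, MeasurableSet A ∧ 0 < μ A ∧ ∀ᵐ t ∂μ.restrict A, σ < f t := by
  have hA : MeasurableSet {t | σ < hf.mk f t} := measurableSet_lt measurable_const hf.measurable_mk
  refine ⟨_, hA, pos_iff_ne_zero.2 fun h0 => hne ?_, ?_⟩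
  · filter_upwards [hσf, hf.ae_eq_mk, measure_eq_zero_iff_ae_notMem.1 h0] with t ht htmk htA
    exact le_antisymm (htmk ▸ not_lt.1 htA) ht
  · filter_upwards [ae_restrict_mem hA, ae_restrict_of_ae hf.ae_eq_mk] with t ht htmk
    exact htmk ▸ ht

lemma not_ae_eq_const_of_firingSet_nonempty {σ : ℝ} {f : ℝ → ℝ} {t : ℝ}
    (hfire : (FiringSet σ f t).Nonempty) : ¬ f =ᵐ[volume] fun _ => σ := by
  obtain ⟨s, -, hs⟩ := hfire
  intro hfσ
  have hzero : ∫ u in t..s, (f u - σ) * Real.exp (σ * u) = 0 := by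
    rw [intervalIntegral.integral_congr_ae (g := fun _ => 0)
      (hfσ.mono fun u hu _ => by simp [hu]), intervalIntegral.integral_zero]
  exact (Real.exp_pos _).not_ge (hzero ▸ hs)

theorem stmt13 (σ : ℝ) (hσ : 0 ≤ σ) (f : ℝ → ℝ) (hf : LocallyIntegrable f volume)
    (hap : MuAP f) (hpos : ∀ᵐ t, σ ≤ f t) :
    (∀ t : ℝ, (FiringSet σ f t).Nonempty) ↔
      ∃ A : Set ℝ, MeasurableSet A ∧ 0 < volume A ∧
        ∀ᵐ t ∂(volume.restrict A), σ < f t := by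
  have hloc : LocallyIntegrable (fun u => f u - σ) volume := hf.sub (locallyIntegrable_const σ)
  have h0 : 0 ≤ᵐ[volume] fun u => f u - σ := hpos.mono fun _ ht => sub_nonneg.2 ht
  constructor
  · intro hfire
    exact exists_pos_measure_ae_lt_of_not_ae_eq hf.aestronglyMeasurable.aemeasurable hpos
      (not_ae_eq_const_of_firingSet_nonempty (hfire 0))
  · rintro ⟨A, -, hA, hAf⟩ t
    obtain ⟨a, ha⟩ := exists_intervalIntegral_pos hloc h0 hA (hAf.mono fun _ ht => sub_pos.2 ht)
    obtain ⟨s, hts, hs⟩ := (hap.sub_const σ).exists_lt_le_intervalIntegral hloc h0 ha t 1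
    refine ⟨s, hts, ?_⟩
    calc Real.exp (σ * t) ≤ Real.exp (σ * t) * ∫ u in t..s, (f u - σ) :=
          le_mul_of_one_le_right (Real.exp_pos _).le hs
      _ ≤ _ := exp_mul_mul_intervalIntegral_le hσ hts.le h0 (hloc.intervalIntegrable t s)
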